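/- Let γ, B ∈ ℝ and let P : ℝ × (0,π) → ℝ be differentiable. Define on S² ⊂ ℝ³ the background vorticity field ω(d) := −(1/2) d × (0,0,γ) and the background strain field E(d) := ℰd − d⟨d, ℰd⟩, where ℰ is the 3×3 matrix with rows (0, γ/2, 0), (γ/2, 0, 0), (0, 0, 0), and set W(α,β) := ω(d(α,β)) + B·E(d(α,β)). Then W is tangent to S² and, for all (α,β) ∈ ℝ × (0,π), the spherical divergence in coordinates satisfies (1/sin β) [ ∂_α( (W·α̂) P ) + ∂_β( sin β (W·β̂) P ) ] = −(3γB/2) sin²β sin(2α) P + (γ/2)(1 + B cos(2α)) ∂_α P + (γB/4) sin(2α) sin(2β) ∂_β P, where α̂ = (−sin α, cos α, 0) and β̂ = (cos α cos β, sin α cos β, −sin β). -/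

import Mathlib

open Matrix

/-- The point on the unit sphere with azimuthal angle `α` and polar angle `β`. -/
noncomputable def sphPoint (α β : ℝ) : Fin 3 → ℝ :=
  ![Real.cos α * Real.sin β, Real.sin α * Real.sin β, Real.cos β]

/-- The unit tangent vector `α̂ = (−sin α, cos α, 0)`. -/
noncomputable def alphaHat (α : ℝ) : Fin 3 → ℝ :=
  ![-Real.sin α, Real.cos α, 0]

/-- The unit tangent vector `β̂ = (cos α cos β, sin α cos β, −sin β)`. -/
noncomputable def betaHat (α β : ℝ) : Fin 3 → ℝ :=
  ![Real.cos α * Real.cos β, Real.sin α * Real.cos β, -Real.sin β]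

/-- The background vorticity field `ω(d) = −(1/2) d × (0,0,γ)`. -/
noncomputable def omegaBG (γ : ℝ) (d : Fin 3 → ℝ) : Fin 3 → ℝ :=
  -(1 / 2 : ℝ) • (d ⨯₃ ![0, 0, γ])

/-- The symmetric gradient `ℰ` of the planar shear background flow. -/
noncomputable def strainBG (γ : ℝ) : Matrix (Fin 3) (Fin 3) ℝ :=
  !![0, γ / 2, 0; γ / 2, 0, 0; 0, 0, 0]

/-- The background strain field `E(d) = ℰd − d⟨d, ℰd⟩`. -/
noncomputable def EBG (γ : ℝ) (d : Fin 3 → ℝ) : Fin 3 → ℝ :=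
  (strainBG γ).mulVec d - (d ⬝ᵥ (strainBG γ).mulVec d) • d

/-- The Jeffery orientation flux `W = ω + B·E` at the point `d(α,β)`. -/
noncomputable def Wfield (γ B α β : ℝ) : Fin 3 → ℝ :=
  omegaBG γ (sphPoint α β) + B • EBG γ (sphPoint α β)

open Real

section Partials

variable {𝕜 E F G : Type*} [NontriviallyNormedField 𝕜]
  [NormedAddCommGroup E] [NormedSpace 𝕜 E] [NormedAddCommGroup F] [NormedSpace 𝕜 F]
  [NormedAddCommGroup G] [NormedSpace 𝕜 G] {f : E → F → G} {a : E} {b : F}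

theorem DifferentiableAt.curry_fst (h : DifferentiableAt 𝕜 (fun q : E × F => f q.1 q.2) (a, b)) :
    DifferentiableAt 𝕜 (fun x => f x b) a := by
  have hx : DifferentiableAt 𝕜 (fun x : E => (x, b)) a :=
    differentiableAt_id.prodMk (differentiableAt_const b)
  exact h.comp a hx

theorem DifferentiableAt.curry_snd (h : DifferentiableAt 𝕜 (fun q : E × F => f q.1 q.2) (a, b)) :
    DifferentiableAt 𝕜 (fun y => f a y) b := by
  have hy : DifferentiableAt 𝕜 (fun y : F => (a, y)) b :=
    (differentiableAt_const a).prodMk differentiableAt_id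
  exact h.comp b hy

end Partials

theorem omegaBG_vec3 (γ x y z : ℝ) : omegaBG γ ![x, y, z] = ![-(γ / 2 * y), γ / 2 * x, 0] := by
  rw [omegaBG, cross_apply]
  dsimp only [cons_val]
  rw [smul_vec3]
  exact vec3_eq (by ring) (by ring) (by ring)

theorem strainBG_mulVec (γ x y z : ℝ) :
    strainBG γ *ᵥ ![x, y, z] = ![γ / 2 * y, γ / 2 * x, 0] := by
  rw [strainBG, cons_mulVec, cons_mulVec, cons_mulVec, empty_mulVec, vec3_dotProduct',
    vec3_dotProduct', vec3_dotProduct']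
  exact vec3_eq (by ring) (by ring) (by ring)

theorem EBG_vec3 (γ x y z : ℝ) :
    EBG γ ![x, y, z] = ![γ * y * (1 / 2 - x ^ 2), γ * x * (1 / 2 - y ^ 2), -(γ * x * y * z)] := by
  rw [EBG, strainBG_mulVec, vec3_dotProduct', smul_vec3, cons_sub_cons, cons_sub_cons,
    cons_sub_cons, empty_sub_empty]
  exact vec3_eq (by ring) (by ring) (by ring)

theorem sphPoint_dotProduct_self (α β : ℝ) : sphPoint α β ⬝ᵥ sphPoint α β = 1 := by
  rw [sphPoint, vec3_dotProduct']
  linear_combination sin β ^ 2 * sin_sq_add_cos_sq α + sin_sq_add_cos_sq β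

theorem omegaBG_dotProduct_self (γ : ℝ) (d : Fin 3 → ℝ) : omegaBG γ d ⬝ᵥ d = 0 := by
  rw [omegaBG, smul_dotProduct, dotProduct_comm, dot_self_cross, smul_zero]

theorem EBG_dotProduct_self (γ : ℝ) {d : Fin 3 → ℝ} (hd : d ⬝ᵥ d = 1) : EBG γ d ⬝ᵥ d = 0 := by
  rw [EBG, sub_dotProduct, smul_dotProduct, hd, smul_eq_mul, mul_one, dotProduct_comm, sub_self]

theorem Wfield_dotProduct_alphaHat (γ B α β : ℝ) :
    Wfield γ B α β ⬝ᵥ alphaHat α = γ / 2 * sin β * (1 + B * cos (2 * α)) := by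
  rw [Wfield, sphPoint, omegaBG_vec3, EBG_vec3, alphaHat, add_dotProduct, smul_dotProduct,
    vec3_dotProduct', vec3_dotProduct', smul_eq_mul, cos_two_mul]
  linear_combination (γ / 2 * sin β * (1 - B)) * sin_sq_add_cos_sq α

theorem Wfield_dotProduct_betaHat (γ B α β : ℝ) :
    Wfield γ B α β ⬝ᵥ betaHat α β = γ * B / 2 * sin (2 * α) * sin β * cos β := by
  rw [Wfield, sphPoint, omegaBG_vec3, EBG_vec3, betaHat, add_dotProduct, smul_dotProduct,
    vec3_dotProduct', vec3_dotProduct', smul_eq_mul, sin_two_mul]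
  linear_combination (-(B * γ * cos α * sin α * sin β ^ 3 * cos β)) * sin_sq_add_cos_sq α

theorem Wfield_dotProduct_sphPoint (γ B α β : ℝ) : Wfield γ B α β ⬝ᵥ sphPoint α β = 0 := by
  rw [Wfield, add_dotProduct, smul_dotProduct, omegaBG_dotProduct_self,
    EBG_dotProduct_self γ (sphPoint_dotProduct_self α β), smul_zero, add_zero]

theorem hasDerivAt_Wfield_dotProduct_alphaHat (γ B α β : ℝ) :
    HasDerivAt (fun a => Wfield γ B a β ⬝ᵥ alphaHat a) (-(γ * B) * sin β * sin (2 * α)) α := by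
  simp only [Wfield_dotProduct_alphaHat]
  have hcos : HasDerivAt (fun a => cos (2 * a)) (-sin (2 * α) * 2) α := by
    simpa using ((hasDerivAt_id α).const_mul 2).cos
  exact (((hcos.const_mul B).const_add 1).const_mul (γ / 2 * sin β)).congr_deriv (by ring)

theorem hasDerivAt_sin_mul_Wfield_dotProduct_betaHat (γ B α β : ℝ) :
    HasDerivAt (fun b => sin b * (Wfield γ B α b ⬝ᵥ betaHat α b))
      (γ * B / 2 * sin (2 * α) * (2 * sin β * cos β ^ 2 - sin β ^ 3)) β := by
  simp only [Wfield_dotProduct_betaHat]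
  have h := (hasDerivAt_sin β).fun_mul
    (((hasDerivAt_sin β).const_mul (γ * B / 2 * sin (2 * α))).fun_mul (hasDerivAt_cos β))
  exact h.congr_deriv (by ring)

/-- The field `W = ω + B·E` is tangent to the sphere, and
its spherical divergence against a differentiable `P` equals
`−(3γB/2) sin²β sin(2α) P + (γ/2)(1 + B cos(2α)) ∂_α P
  + (γB/4) sin(2α) sin(2β) ∂_β P`. -/
theorem background_flow_spherical_divergence (γ B : ℝ) (P : ℝ → ℝ → ℝ)
    (hP : DifferentiableOn ℝ (fun q : ℝ × ℝ => P q.1 q.2)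
      (Set.univ ×ˢ Set.Ioo 0 Real.pi)) :
    (∀ α β : ℝ, Wfield γ B α β ⬝ᵥ sphPoint α β = 0)
    ∧ ∀ α : ℝ, ∀ β ∈ Set.Ioo (0 : ℝ) Real.pi,
      (1 / Real.sin β) *
          (deriv (fun a => (Wfield γ B a β ⬝ᵥ alphaHat a) * P a β) α
            + deriv (fun b =>
                Real.sin b * (Wfield γ B α b ⬝ᵥ betaHat α b) * P α b) β)
        = -(3 * γ * B / 2) * Real.sin β ^ 2 * Real.sin (2 * α) * P α β
          + γ / 2 * (1 + B * Real.cos (2 * α)) * deriv (fun a => P a β) α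
          + γ * B / 4 * Real.sin (2 * α) * Real.sin (2 * β)
              * deriv (fun b => P α b) β := by
  refine ⟨Wfield_dotProduct_sphPoint γ B, fun α β hβ => ?_⟩
  have hsin : sin β ≠ 0 := (sin_pos_of_pos_of_lt_pi hβ.1 hβ.2).ne'
  have hPd : DifferentiableAt ℝ (fun q : ℝ × ℝ => P q.1 q.2) (α, β) :=
    hP.differentiableAt ((isOpen_univ.prod isOpen_Ioo).mem_nhds ⟨trivial, hβ⟩)
  rw [((hasDerivAt_Wfield_dotProduct_alphaHat γ B α β).fun_mul hPd.curry_fst.hasDerivAt).deriv,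
    ((hasDerivAt_sin_mul_Wfield_dotProduct_betaHat γ B α β).fun_mul hPd.curry_snd.hasDerivAt).deriv,
    Wfield_dotProduct_alphaHat, Wfield_dotProduct_betaHat, sin_two_mul β]
  field_simp
  linear_combination (8 * γ * B * sin (2 * α) * P α β) * sin_sq_add_cos_sq β
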